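/- Let μ, ν be probability measures on ℝ^d and K a compact set with ν(K) > 0. If the total variation IPM d_TV(μ,ν) := sup_{‖f‖_∞ ≤ 1} |∫f dμ − ∫f dν| satisfies d_TV(μ,ν) < ν(K), then μ(K) > 0 and the 1-Wasserstein distance between the normalized restrictions μ|_K / μ(K) and ν|_K / ν(K) is at most (4·diam(K) / ν(K)) · d_TV(μ,ν) / (ν(K) − d_TV(μ,ν)). -/

import Mathlib

open MeasureTheory

lemma stmt6_arith (a b t R X Y : ℝ) (ha : 0 < a) (hb0 : 0 < b) (hb1 : b ≤ 1)
    (ht : 0 ≤ t) (htb : t < b) (hab : |a - b| ≤ t) (hR : 0 ≤ R)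
    (hXY : |X - Y| ≤ R * t) (hY : |Y| ≤ R * b) :
    |a⁻¹ * X - b⁻¹ * Y| ≤ 4 * R / b * (t / (b - t)) := by
  have hbt : 0 < b - t := by linarith
  have hba : b - t ≤ a := by
    have := abs_le.mp hab
    linarith [this.1]
  have hinv : |a⁻¹ - b⁻¹| ≤ t / (a * b) := by
    have h1 : a⁻¹ - b⁻¹ = (b - a) / (a * b) := by field_simp
    rw [h1, abs_div, abs_of_pos (mul_pos ha hb0)]
    gcongr
    rw [abs_sub_comm] at hab; exact hab
  have key : |a⁻¹ * X - b⁻¹ * Y| ≤ 2 * R * t / a := by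
    have h1 : a⁻¹ * X - b⁻¹ * Y = a⁻¹ * (X - Y) + (a⁻¹ - b⁻¹) * Y := by
      field_simp
      ring
    rw [h1]
    calc |a⁻¹ * (X - Y) + (a⁻¹ - b⁻¹) * Y|
        ≤ |a⁻¹ * (X - Y)| + |(a⁻¹ - b⁻¹) * Y| := abs_add_le _ _
      _ = a⁻¹ * |X - Y| + |a⁻¹ - b⁻¹| * |Y| := by
          rw [abs_mul, abs_mul, abs_of_nonneg (by positivity : (0:ℝ) ≤ a⁻¹)]
      _ ≤ a⁻¹ * (R * t) + (t / (a * b)) * (R * b) := by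
          gcongr
      _ = 2 * R * t / a := by field_simp; ring
  calc |a⁻¹ * X - b⁻¹ * Y| ≤ 2 * R * t / a := key
    _ ≤ 2 * R * t / (b - t) := by gcongr
    _ ≤ 2 * R * t / (b - t) * (2 / b) := by
        apply le_mul_of_one_le_right (by positivity)
        rw [le_div_iff₀ hb0]; linarith
    _ = 4 * R / b * (t / (b - t)) := by field_simp; ring

/-- If the total variation IPM between probability measures `μ, ν` on `ℝ^d`
is smaller than `ν(K)` for a compact set `K` with `ν(K) > 0`, then `μ(K) > 0` and the
1-Wasserstein distance (IPM over 1-Lipschitz functions) between the normalized restrictions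
`μ|_K / μ(K)` and `ν|_K / ν(K)` is at most
`(4 diam(K) / ν(K)) · d_TV(μ,ν) / (ν(K) - d_TV(μ,ν))`. -/
theorem stmt_6 (d : ℕ) (μ ν : Measure (EuclideanSpace ℝ (Fin d)))
    [IsProbabilityMeasure μ] [IsProbabilityMeasure ν]
    (K : Set (EuclideanSpace ℝ (Fin d))) (hK : IsCompact K)
    (hνK : 0 < (ν K).toReal)
    (dTV : ℝ)
    (hdTV : dTV = sSup {r : ℝ | ∃ f : EuclideanSpace ℝ (Fin d) → ℝ,
        Measurable f ∧ (∀ x, |f x| ≤ 1) ∧ r = |(∫ x, f x ∂μ) - ∫ x, f x ∂ν|})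
    (hlt : dTV < (ν K).toReal) :
    0 < (μ K).toReal ∧
    sSup {r : ℝ | ∃ f : EuclideanSpace ℝ (Fin d) → ℝ, LipschitzWith 1 f ∧
        r = |(μ K).toReal⁻¹ * (∫ x in K, f x ∂μ) - (ν K).toReal⁻¹ * ∫ x in K, f x ∂ν|}
      ≤ (4 * Metric.diam K / (ν K).toReal) * (dTV / ((ν K).toReal - dTV)) := by
  have hKm : MeasurableSet K := hK.measurableSet
  set S := {r : ℝ | ∃ f : EuclideanSpace ℝ (Fin d) → ℝ,
        Measurable f ∧ (∀ x, |f x| ≤ 1) ∧ r = |(∫ x, f x ∂μ) - ∫ x, f x ∂ν|} with hS_def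
  have hSbdd : BddAbove S := by
    refine ⟨2, ?_⟩
    rintro r ⟨f, hfm, hf1, rfl⟩
    have h1 : ‖∫ x, f x ∂μ‖ ≤ 1 * (μ Set.univ).toReal :=
      norm_integral_le_of_norm_le_const (.of_forall fun x => by
        simpa [Real.norm_eq_abs] using hf1 x)
    have h2 : ‖∫ x, f x ∂ν‖ ≤ 1 * (ν Set.univ).toReal :=
      norm_integral_le_of_norm_le_const (.of_forall fun x => by
        simpa [Real.norm_eq_abs] using hf1 x)
    simp only [measure_univ, ENNReal.toReal_one, one_mul, Real.norm_eq_abs] at h1 h2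
    calc |(∫ x, f x ∂μ) - ∫ x, f x ∂ν| ≤ |∫ x, f x ∂μ| + |∫ x, f x ∂ν| := abs_sub _ _
      _ ≤ 2 := by linarith
  have ht0 : 0 ≤ dTV := by
    rw [hdTV]
    exact le_csSup hSbdd ⟨0, measurable_const, fun x => by simp, by simp⟩
  have hab : |(μ K).toReal - (ν K).toReal| ≤ dTV := by
    rw [hdTV]
    apply le_csSup hSbdd
    refine ⟨K.indicator 1, measurable_const.indicator hKm, fun x => ?_, ?_⟩
    · by_cases hx : x ∈ K <;> simp [Set.indicator_apply, hx]
    · rw [integral_indicator_one hKm, integral_indicator_one hKm]; rfl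
  have hbpos : 0 < (ν K).toReal := hνK
  have hapos : 0 < (μ K).toReal := by
    have := (abs_le.mp hab).1
    linarith
  refine ⟨hapos, ?_⟩
  obtain ⟨x₀, hx₀⟩ : K.Nonempty := by
    rw [Set.nonempty_iff_ne_empty]
    rintro rfl
    simp at hνK
  have hR0 : 0 ≤ Metric.diam K := Metric.diam_nonneg
  have hb1 : (ν K).toReal ≤ 1 := by
    have h := measure_mono (Set.subset_univ K) (μ := ν)
    rw [measure_univ] at h
    exact ENNReal.toReal_le_of_le_ofReal zero_le_one (by simpa using h)
  apply Real.sSup_le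
  · rintro r ⟨f, hf, rfl⟩
    have hgK : ∀ x ∈ K, |f x - f x₀| ≤ Metric.diam K := by
      intro x hx
      calc |f x - f x₀| = dist (f x) (f x₀) := (Real.dist_eq _ _).symm
        _ ≤ 1 * dist x x₀ := by simpa using hf.dist_le_mul x x₀
        _ = dist x x₀ := one_mul _
        _ ≤ Metric.diam K := Metric.dist_le_diam_of_mem hK.isBounded hx hx₀
    have hfc : Continuous f := hf.continuous
    have hgc : Continuous (fun x => f x - f x₀) := hfc.sub continuous_const
    have hfintμ : IntegrableOn f K μ := hfc.continuousOn.integrableOn_compact hK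
    have hfintν : IntegrableOn f K ν := hfc.continuousOn.integrableOn_compact hK
    have hcintμ : IntegrableOn (fun _ => f x₀) K μ :=
      integrableOn_const hK.measure_lt_top.ne
    have hcintν : IntegrableOn (fun _ => f x₀) K ν :=
      integrableOn_const hK.measure_lt_top.ne
    have hXeq : ∫ x in K, (f x - f x₀) ∂μ = (∫ x in K, f x ∂μ) - f x₀ * (μ K).toReal := by
      rw [integral_sub hfintμ hcintμ, setIntegral_const, smul_eq_mul, mul_comm]; rfl
    have hYeq : ∫ x in K, (f x - f x₀) ∂ν = (∫ x in K, f x ∂ν) - f x₀ * (ν K).toReal := by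
      rw [integral_sub hfintν hcintν, setIntegral_const, smul_eq_mul, mul_comm]; rfl
    have hmain : (μ K).toReal⁻¹ * (∫ x in K, f x ∂μ) - (ν K).toReal⁻¹ * (∫ x in K, f x ∂ν)
        = (μ K).toReal⁻¹ * (∫ x in K, (f x - f x₀) ∂μ)
          - (ν K).toReal⁻¹ * (∫ x in K, (f x - f x₀) ∂ν) := by
      rw [hXeq, hYeq]
      field_simp
      ring
    rw [hmain]
    have hYb : |∫ x in K, (f x - f x₀) ∂ν| ≤ Metric.diam K * (ν K).toReal := by
      have h1 : ‖∫ x in K, (f x - f x₀) ∂ν‖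
          ≤ Metric.diam K * (ν.restrict K Set.univ).toReal := by
        apply norm_integral_le_of_norm_le_const
        rw [ae_restrict_iff' hKm]
        exact .of_forall fun x hx => by simpa [Real.norm_eq_abs] using hgK x hx
      simpa [Measure.restrict_apply, Real.norm_eq_abs] using h1
    have hXa : |∫ x in K, (f x - f x₀) ∂μ| ≤ Metric.diam K * (μ K).toReal := by
      have h1 : ‖∫ x in K, (f x - f x₀) ∂μ‖
          ≤ Metric.diam K * (μ.restrict K Set.univ).toReal := by
        apply norm_integral_le_of_norm_le_const
        rw [ae_restrict_iff' hKm]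
        exact .of_forall fun x hx => by simpa [Real.norm_eq_abs] using hgK x hx
      simpa [Measure.restrict_apply, Real.norm_eq_abs] using h1
    have hXY : |(∫ x in K, (f x - f x₀) ∂μ) - ∫ x in K, (f x - f x₀) ∂ν|
        ≤ Metric.diam K * dTV := by
      rcases eq_or_lt_of_le hR0 with hR0' | hRpos
      · have hX0 : (∫ x in K, (f x - f x₀) ∂μ) = 0 := by
          have := hXa
          rw [← hR0', zero_mul] at this
          exact abs_nonpos_iff.mp this
        have hY0 : (∫ x in K, (f x - f x₀) ∂ν) = 0 := by
          have := hYb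
          rw [← hR0', zero_mul] at this
          exact abs_nonpos_iff.mp this
        rw [hX0, hY0, sub_zero, abs_zero]
        exact mul_nonneg hR0 ht0
      · set h : EuclideanSpace ℝ (Fin d) → ℝ :=
          K.indicator (fun x => (f x - f x₀) / Metric.diam K) with hh_def
        have hmem : |(∫ x, h x ∂μ) - ∫ x, h x ∂ν| ∈ S := by
          refine ⟨h, ((hgc.measurable).div_const _).indicator hKm, fun x => ?_, rfl⟩
          by_cases hx : x ∈ K
          · simp only [hh_def, Set.indicator_of_mem hx]
            rw [abs_div, abs_of_pos hRpos, div_le_one hRpos]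
            exact hgK x hx
          · simp [hh_def, Set.indicator_of_notMem hx]
        have hle : |(∫ x, h x ∂μ) - ∫ x, h x ∂ν| ≤ dTV := by
          rw [hdTV]; exact le_csSup hSbdd hmem
        have hμh : ∫ x, h x ∂μ = (∫ x in K, (f x - f x₀) ∂μ) / Metric.diam K := by
          rw [hh_def, integral_indicator hKm, integral_div]
        have hνh : ∫ x, h x ∂ν = (∫ x in K, (f x - f x₀) ∂ν) / Metric.diam K := by
          rw [hh_def, integral_indicator hKm, integral_div]
        rw [hμh, hνh, div_sub_div_same, abs_div, abs_of_pos hRpos,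
          div_le_iff₀ hRpos] at hle
        linarith
    exact stmt6_arith _ _ _ _ _ _ hapos hbpos hb1 ht0 hlt hab hR0 hXY hYb
  · apply mul_nonneg
    · exact div_nonneg (by positivity) hbpos.le
    · exact div_nonneg ht0 (by linarith)
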